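/- For any Borel set D ⊆ ℝⁿ with μⁿ(D) > 0, the function (b₁,...,bₙ) ↦ log Ψ(b₁,...,bₙ; D) is convex on the positive orthant of ℝⁿ. -/

import Mathlib

open MeasureTheory ProbabilityTheory Filter Finset

/-- The recursively defined path-probability function `Ψ` for spherically
symmetric trees, extended to positive real generation sizes:
`Ψ(b; D) = μ(D)^b` and
`Ψ(b₁,…,bₙ; D) = (∫ Ψ(b₂/b₁,…,bₙ/b₁; D/x₁) dμ(x₁))^{b₁}`. -/
noncomputable def Psi (μ : Measure ℝ) : (n : ℕ) → (Fin (n + 1) → ℝ) → Set (Fin (n + 1) → ℝ) → ℝ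
  | 0, b, D => (μ {x | (fun _ : Fin 1 => x) ∈ D}).toReal ^ (b 0)
  | n + 1, b, D =>
      (∫ x, Psi μ n (fun i => b i.succ / b 0) {y | Fin.cons x y ∈ D} ∂μ) ^ (b 0)

set_option linter.unusedSectionVars false

section Aux

variable (μ : Measure ℝ) [IsProbabilityMeasure μ]

lemma measurable_finCons {α : Type*} [MeasurableSpace α] {n : ℕ}
    {f : α → ℝ} {g : α → Fin n → ℝ} (hf : Measurable f) (hg : Measurable g) :
    Measurable fun x => (Fin.cons (f x) (g x) : Fin (n+1) → ℝ) := by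
  rw [measurable_pi_iff]
  intro i
  refine Fin.cases ?_ ?_ i
  · simpa using hf
  · intro j
    simp only [Fin.cons_succ]
    exact (measurable_pi_apply j).comp hg

lemma psi_nonneg : ∀ (n : ℕ) (b : Fin (n+1) → ℝ) (D : Set (Fin (n+1) → ℝ)),
    0 ≤ Psi μ n b D := by
  intro n
  induction n with
  | zero => intro b D; exact Real.rpow_nonneg ENNReal.toReal_nonneg _
  | succ n ih =>
      intro b D
      exact Real.rpow_nonneg (integral_nonneg fun x => ih _ _) _

lemma psi_meas : ∀ (n : ℕ) (b : Fin (n+1) → ℝ) {α : Type} [MeasurableSpace α]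
    (s : Set (α × (Fin (n+1) → ℝ))), MeasurableSet s →
    Measurable fun x => Psi μ n b {y | (x, y) ∈ s} := by
  intro n
  induction n with
  | zero =>
      intro b α _ s hs
      have hmap : Measurable fun p : α × ℝ => (p.1, fun _ : Fin 1 => p.2) :=
        measurable_fst.prodMk (measurable_pi_lambda _ fun _ => measurable_snd)
      have hs' : MeasurableSet ((fun p : α × ℝ => (p.1, fun _ : Fin 1 => p.2)) ⁻¹' s) :=
        hmap hs
      have h1 : Measurable fun x : α =>
          μ (Prod.mk x ⁻¹' ((fun p : α × ℝ => (p.1, fun _ : Fin 1 => p.2)) ⁻¹' s)) :=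
        measurable_measure_prodMk_left hs'
      exact (h1.ennreal_toReal).pow_const _
  | succ n ih =>
      intro b α _ s hs
      have hmap : Measurable fun p : (α × ℝ) × (Fin (n+1) → ℝ) =>
          (p.1.1, (Fin.cons p.1.2 p.2 : Fin (n+2) → ℝ)) :=
        (measurable_fst.comp measurable_fst).prodMk
          (measurable_finCons (measurable_snd.comp measurable_fst) measurable_snd)
      have hs2 : MeasurableSet ((fun p : (α × ℝ) × (Fin (n+1) → ℝ) =>
          (p.1.1, (Fin.cons p.1.2 p.2 : Fin (n+2) → ℝ))) ⁻¹' s) := hmap hs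
      have h := ih (fun i => b i.succ / b 0) _ hs2
      have h2 : Measurable fun x : α =>
          ∫ y, Psi μ n (fun i => b i.succ / b 0)
            {z | (x, (Fin.cons y z : Fin (n+2) → ℝ)) ∈ s} ∂μ :=
        (h.stronglyMeasurable.integral_prod_right').measurable
      exact h2.pow_const _

lemma integral_le_one_aux {f : ℝ → ℝ} (h : ∀ x, f x ≤ 1) : ∫ x, f x ∂μ ≤ 1 := by
  by_cases hf : Integrable f μ
  · calc ∫ x, f x ∂μ ≤ ∫ _, (1:ℝ) ∂μ := integral_mono hf (integrable_const 1) h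
      _ = 1 := by simp
  · simp [integral_undef hf]

lemma psi_le_one : ∀ (n : ℕ) (b : Fin (n+1) → ℝ), (∀ i, 0 < b i) →
    ∀ (D : Set (Fin (n+1) → ℝ)), Psi μ n b D ≤ 1 := by
  intro n
  induction n with
  | zero =>
      intro b hb D
      refine Real.rpow_le_one ENNReal.toReal_nonneg ?_ (hb 0).le
      have := prob_le_one (μ := μ) (s := {x | (fun _ : Fin 1 => x) ∈ D})
      simpa using ENNReal.toReal_mono ENNReal.one_ne_top this
  | succ n ih =>
      intro b hb D
      refine Real.rpow_le_one (integral_nonneg fun x => psi_nonneg μ _ _ _) ?_ (hb 0).le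
      exact integral_le_one_aux μ fun x =>
        ih _ (fun i => div_pos (hb i.succ) (hb 0)) _

end Aux

section Aux2

set_option linter.unusedSectionVars false

variable (μ : Measure ℝ) [IsProbabilityMeasure μ]

lemma psi_meas_slice {n : ℕ} (b : Fin (n+1) → ℝ) (D : Set (Fin (n+2) → ℝ))
    (hD : MeasurableSet D) :
    Measurable fun x : ℝ => Psi μ n b {y | Fin.cons x y ∈ D} := by
  have hmap : Measurable fun p : ℝ × (Fin (n+1) → ℝ) =>
      (Fin.cons p.1 p.2 : Fin (n+2) → ℝ) :=
    measurable_finCons measurable_fst measurable_snd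
  exact psi_meas μ n b _ (hmap hD)

lemma psi_integrable_slice {n : ℕ} (b : Fin (n+1) → ℝ) (hb : ∀ i, 0 < b i)
    (D : Set (Fin (n+2) → ℝ)) (hD : MeasurableSet D) :
    Integrable (fun x : ℝ => Psi μ n b {y | Fin.cons x y ∈ D}) μ := by
  refine Integrable.mono' (integrable_const (1:ℝ))
    (psi_meas_slice μ b D hD).aestronglyMeasurable (ae_of_all μ fun x => ?_)
  rw [Real.norm_of_nonneg (psi_nonneg μ _ _ _)]
  exact psi_le_one μ n b hb _

lemma slice_pos {n : ℕ} (D : Set (Fin (n+2) → ℝ)) (hD : MeasurableSet D)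
    (h : 0 < Measure.pi (fun _ : Fin (n+2) => μ) D) :
    0 < μ {x : ℝ | 0 < Measure.pi (fun _ : Fin (n+1) => μ) {y | Fin.cons x y ∈ D}} := by
  set e := MeasurableEquiv.piFinSuccAbove (fun _ : Fin (n+2) => ℝ) 0 with he
  have hmp := measurePreserving_piFinSuccAbove (fun _ : Fin (n+2) => μ) 0
  set T : Set (ℝ × (Fin (n+1) → ℝ)) := e.symm ⁻¹' D with hT
  have hTm : MeasurableSet T := e.symm.measurable hD
  have hpre : e ⁻¹' T = D := by
    ext f; simp [hT]
  have h1 : (μ.prod (Measure.pi fun _ : Fin (n+1) => μ)) T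
      = Measure.pi (fun _ : Fin (n+2) => μ) D := by
    rw [← hpre]
    exact (hmp.measure_preimage_equiv T).symm
  have hslice : ∀ x : ℝ, Prod.mk x ⁻¹' T = {y | Fin.cons x y ∈ D} := by
    intro x; ext y
    simp [hT, he, MeasurableEquiv.piFinSuccAbove, Fin.insertNth_zero', Fin.consEquiv]
  have h2 : (μ.prod (Measure.pi fun _ : Fin (n+1) => μ)) T
      = ∫⁻ x, Measure.pi (fun _ : Fin (n+1) => μ) {y | Fin.cons x y ∈ D} ∂μ := by
    rw [Measure.prod_apply hTm]
    exact lintegral_congr fun x => by rw [hslice x]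
  by_contra hc
  have hzero : μ {x : ℝ | Measure.pi (fun _ : Fin (n+1) => μ) {y | Fin.cons x y ∈ D} ≠ 0}
      = 0 := by
    have := le_zero_iff.mp (not_lt.mp hc)
    convert this using 2
    ext x
    simp [pos_iff_ne_zero]
  have hae : (fun x : ℝ => Measure.pi (fun _ : Fin (n+1) => μ) {y | Fin.cons x y ∈ D})
      =ᵐ[μ] 0 := hzero
  have : (μ.prod (Measure.pi fun _ : Fin (n+1) => μ)) T = 0 := by
    rw [h2, lintegral_congr_ae hae]
    simp
  rw [h1] at this
  exact absurd this (ne_of_gt h)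

lemma psi_pos : ∀ (n : ℕ) (b : Fin (n+1) → ℝ), (∀ i, 0 < b i) →
    ∀ (D : Set (Fin (n+1) → ℝ)), MeasurableSet D →
    0 < Measure.pi (fun _ : Fin (n+1) => μ) D → 0 < Psi μ n b D := by
  intro n
  induction n with
  | zero =>
      intro b hb D hD h
      have hmp := measurePreserving_funUnique μ (Fin 1)
      have hpre : (MeasurableEquiv.funUnique (Fin 1) ℝ) ⁻¹'
          {x : ℝ | (fun _ : Fin 1 => x) ∈ D} = D := by
        ext f
        have : (fun _ : Fin 1 => f 0) = f := by
          funext i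
          have : i = 0 := Subsingleton.elim i 0
          rw [this]
        simp [MeasurableEquiv.funUnique, MeasurableEquiv.piUnique, Equiv.piUnique, this]
      have h0 : 0 < μ {x : ℝ | (fun _ : Fin 1 => x) ∈ D} := by
        have := hmp.measure_preimage_equiv {x : ℝ | (fun _ : Fin 1 => x) ∈ D}
        rw [hpre] at this
        rw [← this]
        exact h
      have : 0 < (μ {x : ℝ | (fun _ : Fin 1 => x) ∈ D}).toReal :=
        ENNReal.toReal_pos (ne_of_gt h0) (measure_ne_top μ _)
      exact Real.rpow_pos_of_pos this _
  | succ n ih =>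
      intro b hb D hD h
      have hb' : ∀ i : Fin (n+1), 0 < b i.succ / b 0 :=
        fun i => div_pos (hb i.succ) (hb 0)
      have hslice := slice_pos μ D hD h
      have hnn : 0 ≤ fun x : ℝ => Psi μ n (fun i => b i.succ / b 0) {y | Fin.cons x y ∈ D} :=
        fun x => psi_nonneg μ _ _ _
      have hint := psi_integrable_slice μ _ hb' D hD
      have hsupp : {x : ℝ | 0 < Measure.pi (fun _ : Fin (n+1) => μ) {y | Fin.cons x y ∈ D}}
          ⊆ Function.support fun x =>
            Psi μ n (fun i => b i.succ / b 0) {y | Fin.cons x y ∈ D} := by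
        intro x hx
        have hm : MeasurableSet {y : Fin (n+1) → ℝ | Fin.cons x y ∈ D} :=
          (measurable_finCons measurable_const measurable_id) hD
        exact ne_of_gt (ih _ hb' _ hm hx)
      have hpos : 0 < ∫ x, Psi μ n (fun i => b i.succ / b 0) {y | Fin.cons x y ∈ D} ∂μ := by
        rw [integral_pos_iff_support_of_nonneg hnn hint]
        exact lt_of_lt_of_le hslice (measure_mono hsupp)
      exact Real.rpow_pos_of_pos hpos _

end Aux2

section Main

set_option linter.unusedSectionVars false
set_option maxHeartbeats 1000000

variable (μ : Measure ℝ) [IsProbabilityMeasure μ]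

lemma psi_combo : ∀ (n : ℕ) (b c : Fin (n+1) → ℝ), (∀ i, 0 < b i) → (∀ i, 0 < c i) →
    ∀ (t s : ℝ), 0 < t → 0 < s → t + s = 1 →
    ∀ (D : Set (Fin (n+1) → ℝ)), MeasurableSet D →
    Psi μ n (t • b + s • c) D ≤ Psi μ n b D ^ t * Psi μ n c D ^ s := by
  intro n
  induction n with
  | zero =>
      intro b c hb hc t s ht hs hts D hD
      simp only [Psi]
      set m := (μ {x | (fun _ : Fin 1 => x) ∈ D}).toReal with hm
      have hm0 : 0 ≤ m := ENNReal.toReal_nonneg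
      have hw : (t • b + s • c) 0 = t * b 0 + s * c 0 := by
        simp [smul_eq_mul]
      have hwpos : 0 < t * b 0 + s * c 0 :=
        add_pos (mul_pos ht (hb 0)) (mul_pos hs (hc 0))
      rcases eq_or_lt_of_le hm0 with h0 | h0
      · rw [hw, ← h0]
        rw [Real.zero_rpow hwpos.ne', Real.zero_rpow (hb 0).ne',
          Real.zero_rpow (hc 0).ne', Real.zero_rpow ht.ne']
        simp
      · have e1 : t * b 0 + s * c 0 = b 0 * t + c 0 * s := by ring
        rw [hw, e1, Real.rpow_add h0, ← Real.rpow_mul hm0, ← Real.rpow_mul hm0]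
  | succ n ih =>
      intro b c hb hc t s ht hs hts D hD
      simp only [Psi]
      have hb0 : (b 0 : ℝ) ≠ 0 := (hb 0).ne'
      have hc0 : (c 0 : ℝ) ≠ 0 := (hc 0).ne'
      have hw0 : (t • b + s • c) 0 = t * b 0 + s * c 0 := by simp [smul_eq_mul]
      have hw0pos : 0 < t * b 0 + s * c 0 :=
        add_pos (mul_pos ht (hb 0)) (mul_pos hs (hc 0))
      have hw0ne : t * b 0 + s * c 0 ≠ 0 := hw0pos.ne'
      set A := fun i : Fin (n+1) => b i.succ / b 0 with hA
      set C := fun i : Fin (n+1) => c i.succ / c 0 with hC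
      set l := t * b 0 / (t * b 0 + s * c 0) with hldef
      set l' := s * c 0 / (t * b 0 + s * c 0) with hl'def
      have hl : 0 < l := div_pos (mul_pos ht (hb 0)) hw0pos
      have hl' : 0 < l' := div_pos (mul_pos hs (hc 0)) hw0pos
      have hll' : l + l' = 1 := by
        rw [hldef, hl'def, ← add_div, div_self hw0ne]
      have hApos : ∀ i, 0 < A i := fun i => div_pos (hb i.succ) (hb 0)
      have hCpos : ∀ i, 0 < C i := fun i => div_pos (hc i.succ) (hc 0)
      have hWA : (fun i : Fin (n+1) => (t • b + s • c) i.succ / (t • b + s • c) 0)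
          = l • A + l' • C := by
        funext i
        simp only [Pi.add_apply, Pi.smul_apply, smul_eq_mul, hA, hC, hldef, hl'def]
        field_simp
      set f := fun x : ℝ => Psi μ n A {y | Fin.cons x y ∈ D} with hf
      set g := fun x : ℝ => Psi μ n C {y | Fin.cons x y ∈ D} with hg
      have hfm : Measurable f := psi_meas_slice μ A D hD
      have hgm : Measurable g := psi_meas_slice μ C D hD
      have hf0 : ∀ x, 0 ≤ f x := fun x => psi_nonneg μ _ _ _
      have hg0 : ∀ x, 0 ≤ g x := fun x => psi_nonneg μ _ _ _
      have hf1 : ∀ x, f x ≤ 1 := fun x => psi_le_one μ n A hApos _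
      have hg1 : ∀ x, g x ≤ 1 := fun x => psi_le_one μ n C hCpos _
      have hpt : ∀ x : ℝ,
          Psi μ n (fun i => (t • b + s • c) i.succ / (t • b + s • c) 0)
            {y | Fin.cons x y ∈ D} ≤ f x ^ l * g x ^ l' := by
        intro x
        rw [hWA]
        exact ih A C hApos hCpos l l' hl hl' hll' _
          ((measurable_finCons measurable_const measurable_id) hD)
      have hWpos : ∀ i : Fin (n+2), 0 < (t • b + s • c) i := fun i => by
        simp only [Pi.add_apply, Pi.smul_apply, smul_eq_mul]
        exact add_pos (mul_pos ht (hb i)) (mul_pos hs (hc i))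
      have hWinner : ∀ i : Fin (n+1),
          0 < (t • b + s • c) i.succ / (t • b + s • c) 0 :=
        fun i => div_pos (hWpos i.succ) (hWpos 0)
      have hint1 : Integrable (fun x : ℝ =>
          Psi μ n (fun i => (t • b + s • c) i.succ / (t • b + s • c) 0)
            {y | Fin.cons x y ∈ D}) μ :=
        psi_integrable_slice μ _ hWinner D hD
      have hint2 : Integrable (fun x : ℝ => f x ^ l * g x ^ l') μ := by
        refine Integrable.mono' (integrable_const (1:ℝ))
          (((hfm.pow_const l).mul (hgm.pow_const l')).aestronglyMeasurable)
          (ae_of_all μ fun x => ?_)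
        rw [Real.norm_of_nonneg
          (mul_nonneg (Real.rpow_nonneg (hf0 x) _) (Real.rpow_nonneg (hg0 x) _))]
        exact mul_le_one₀ (Real.rpow_le_one (hf0 x) (hf1 x) hl.le)
          (Real.rpow_nonneg (hg0 x) _) (Real.rpow_le_one (hg0 x) (hg1 x) hl'.le)
      have h1 : ∫ x, Psi μ n (fun i => (t • b + s • c) i.succ / (t • b + s • c) 0)
          {y | Fin.cons x y ∈ D} ∂μ ≤ ∫ x, f x ^ l * g x ^ l' ∂μ :=
        integral_mono hint1 hint2 hpt
      have hpq : Real.HolderConjugate (1/l) (1/l') := by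
        rw [Real.holderConjugate_iff]
        constructor
        · rw [lt_div_iff₀ hl, one_mul]
          nlinarith
        · rw [one_div, one_div, inv_inv, inv_inv]
          exact hll'
      have hFmem : MemLp (fun x => f x ^ l) (ENNReal.ofReal (1/l)) μ := by
        refine (memLp_top_of_bound ((hfm.pow_const l).aestronglyMeasurable) 1
          (ae_of_all μ fun x => ?_)).mono_exponent le_top
        rw [Real.norm_of_nonneg (Real.rpow_nonneg (hf0 x) _)]
        exact Real.rpow_le_one (hf0 x) (hf1 x) hl.le
      have hGmem : MemLp (fun x => g x ^ l') (ENNReal.ofReal (1/l')) μ := by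
        refine (memLp_top_of_bound ((hgm.pow_const l').aestronglyMeasurable) 1
          (ae_of_all μ fun x => ?_)).mono_exponent le_top
        rw [Real.norm_of_nonneg (Real.rpow_nonneg (hg0 x) _)]
        exact Real.rpow_le_one (hg0 x) (hg1 x) hl'.le
      have h2 := integral_mul_le_Lp_mul_Lq_of_nonneg hpq
        (ae_of_all μ fun x => Real.rpow_nonneg (hf0 x) l)
        (ae_of_all μ fun x => Real.rpow_nonneg (hg0 x) l') hFmem hGmem
      have hsimpf : ∀ x, (f x ^ l) ^ (1/l) = f x := fun x => by
        rw [← Real.rpow_mul (hf0 x), mul_one_div_cancel hl.ne', Real.rpow_one]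
      have hsimpg : ∀ x, (g x ^ l') ^ (1/l') = g x := fun x => by
        rw [← Real.rpow_mul (hg0 x), mul_one_div_cancel hl'.ne', Real.rpow_one]
      simp only [hsimpf, hsimpg, one_div_one_div] at h2
      have h3 : ∫ x, Psi μ n (fun i => (t • b + s • c) i.succ / (t • b + s • c) 0)
          {y | Fin.cons x y ∈ D} ∂μ ≤ (∫ x, f x ∂μ) ^ l * (∫ x, g x ∂μ) ^ l' :=
        le_trans h1 h2
      have hIf : 0 ≤ ∫ x, f x ∂μ := integral_nonneg hf0
      have hIg : 0 ≤ ∫ x, g x ∂μ := integral_nonneg hg0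
      have hle1 : l * (t * b 0 + s * c 0) = b 0 * t := by
        rw [hldef, div_mul_cancel₀ _ hw0ne]; ring
      have hle2 : l' * (t * b 0 + s * c 0) = c 0 * s := by
        rw [hl'def, div_mul_cancel₀ _ hw0ne]; ring
      calc (∫ x, Psi μ n (fun i => (t • b + s • c) i.succ / (t • b + s • c) 0)
            {y | Fin.cons x y ∈ D} ∂μ) ^ ((t • b + s • c) 0)
          ≤ ((∫ x, f x ∂μ) ^ l * (∫ x, g x ∂μ) ^ l') ^ ((t • b + s • c) 0) := by
            refine Real.rpow_le_rpow (integral_nonneg fun x => psi_nonneg μ _ _ _) h3 ?_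
            rw [hw0]; exact hw0pos.le
        _ = ((∫ x, f x ∂μ) ^ b 0) ^ t * ((∫ x, g x ∂μ) ^ c 0) ^ s := by
            rw [hw0, Real.mul_rpow (Real.rpow_nonneg hIf _) (Real.rpow_nonneg hIg _),
              ← Real.rpow_mul hIf, ← Real.rpow_mul hIg, hle1, hle2,
              Real.rpow_mul hIf, Real.rpow_mul hIg]

end Main

/-- if `μⁿ(D) > 0` then `log Ψ(·; D)` is convex on the positive orthant. -/
theorem log_psi_convexOn (μ : Measure ℝ) [IsProbabilityMeasure μ]
    (n : ℕ) (D : Set (Fin (n + 1) → ℝ)) (hD : MeasurableSet D)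
    (hpos : 0 < Measure.pi (fun _ : Fin (n + 1) => μ) D) :
    ConvexOn ℝ {b : Fin (n + 1) → ℝ | ∀ i, 0 < b i}
      (fun b => Real.log (Psi μ n b D)) := by
  constructor
  · intro a ha b hb t s ht hs hts
    intro i
    simp only [Pi.add_apply, Pi.smul_apply, smul_eq_mul]
    rcases eq_or_lt_of_le ht with h | h
    · have hs1 : s = 1 := by linarith
      rw [← h, hs1, zero_mul, zero_add, one_mul]
      exact hb i
    · exact add_pos_of_pos_of_nonneg (mul_pos h (ha i)) (mul_nonneg hs (hb i).le)
  · intro a ha b hb t s ht hs hts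
    rcases eq_or_lt_of_le ht with h | h
    · have hs1 : s = 1 := by linarith
      rw [← h, hs1]
      simp
    rcases eq_or_lt_of_le hs with h' | h'
    · have ht1 : t = 1 := by linarith
      rw [← h', ht1]
      simp
    have h1 := psi_combo μ n a b ha hb t s h h' hts D hD
    have hpa : 0 < Psi μ n a D := psi_pos μ n a ha D hD hpos
    have hpb : 0 < Psi μ n b D := psi_pos μ n b hb D hD hpos
    have hwpos : ∀ i, 0 < (t • a + s • b) i := fun i => by
      simp only [Pi.add_apply, Pi.smul_apply, smul_eq_mul]
      exact add_pos (mul_pos h (ha i)) (mul_pos h' (hb i))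
    have hpw : 0 < Psi μ n (t • a + s • b) D := psi_pos μ n _ hwpos D hD hpos
    have hlog := Real.log_le_log hpw h1
    rw [Real.log_mul (Real.rpow_pos_of_pos hpa t).ne' (Real.rpow_pos_of_pos hpb s).ne',
      Real.log_rpow hpa, Real.log_rpow hpb] at hlog
    simpa [smul_eq_mul] using hlog
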